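/- (Philip Hall's theorem, used in the paper to derive that Eulerian-ness is necessary for CW posets.) Let P be a finite partially ordered set and let x ≤ y in P. Then the Möbius function of P satisfies μ(x,y) = Σ_{k ≥ 0} (-1)^k c_k(x,y), where c_k(x,y) denotes the number of chains x = z₀ < z₁ < ⋯ < z_k = y of length k in P (so c_0(x,y) = 1 if x = y and 0 otherwise). -/

import Mathlib

/-!
The incidence algebra element `η = ζ - 1` has `ηᵏ(x, y) = c_k(x, y)`, since multiplying by `η` on
the right appends one strict step to a chain. Chains in `P` have length less than `|P|`, so `η`
is nilpotent with `η^|P| = 0`, and the inverse of `ζ = 1 + η` is the finite geometric series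
`μ = ∑_{k < |P|} (-η)ᵏ`. Evaluating at `(x, y)` gives the alternating sum of chain counts.
-/

open Finset

/-- The number of chains `x = z₀ < z₁ < ⋯ < z_k = y` of length `k` from `x` to `y`. -/
noncomputable def chainCount {P : Type*} [PartialOrder P] (x y : P) (k : ℕ) : ℕ :=
  Nat.card {z : Fin (k + 1) → P // StrictMono z ∧ z 0 = x ∧ z (Fin.last k) = y}

theorem eq_sum_range_neg_pow_of_mul_one_add_eq_one {R : Type*} [Ring R] {u η : R} {n : ℕ}
    (hu : u * (1 + η) = 1) (hη : η ^ n = 0) : u = ∑ k ∈ range n, (-η) ^ k := by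
  have hgeom : (1 + η) * ∑ k ∈ range n, (-η) ^ k = 1 := by
    rw [← sub_neg_eq_add, mul_neg_geom_sum, neg_pow, hη, mul_zero, sub_zero]
  calc u = u * ((1 + η) * ∑ k ∈ range n, (-η) ^ k) := by rw [hgeom, mul_one]
    _ = ∑ k ∈ range n, (-η) ^ k := by rw [← mul_assoc, hu, one_mul]

namespace IncidenceAlgebra

variable {𝕜 P : Type*}

theorem sum_apply {ι : Type*} [AddCommMonoid 𝕜] [LE P] (s : Finset ι)
    (f : ι → IncidenceAlgebra 𝕜 P) (a b : P) : (∑ i ∈ s, f i) a b = ∑ i ∈ s, f i a b :=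
  map_sum (⟨⟨fun g => g a b, rfl⟩, fun _ _ => rfl⟩ : IncidenceAlgebra 𝕜 P →+ 𝕜) f s

theorem neg_pow_apply [Ring 𝕜] [Preorder P] [LocallyFiniteOrder P] [DecidableEq P]
    (f : IncidenceAlgebra 𝕜 P) (k : ℕ) (a b : P) : ((-f) ^ k) a b = (-1) ^ k * (f ^ k) a b := by
  rcases Nat.even_or_odd k with hk | hk
  · rw [hk.neg_pow, hk.neg_one_pow, one_mul]
  · rw [hk.neg_pow, hk.neg_one_pow, neg_apply, neg_one_mul]

theorem mul_zeta_apply [NonAssocSemiring 𝕜] [Preorder P] [LocallyFiniteOrder P] [DecidableLE P]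
    (f : IncidenceAlgebra 𝕜 P) (a b : P) :
    (f * zeta 𝕜 : IncidenceAlgebra 𝕜 P) a b = ∑ z ∈ Icc a b, f a z := by
  rw [mul_apply]
  exact sum_congr rfl fun z hz => by rw [zeta_of_le (mem_Icc.1 hz).2, mul_one]

theorem mul_zeta_sub_one_apply [Ring 𝕜] [PartialOrder P] [LocallyFiniteOrder P] [DecidableEq P]
    [DecidableLE P] (f : IncidenceAlgebra 𝕜 P) (a b : P) :
    (f * (zeta 𝕜 - 1) : IncidenceAlgebra 𝕜 P) a b = ∑ z ∈ Ico a b, f a z := by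
  rw [mul_sub, mul_one, sub_apply, mul_zeta_apply]
  by_cases hab : a ≤ b
  · rw [← Ico_insert_right hab, sum_insert right_notMem_Ico, add_sub_cancel_left]
  · rw [Icc_eq_empty hab, Ico_eq_empty fun h => hab h.le, apply_eq_zero_of_not_le hab,
      sum_empty, sub_zero]

end IncidenceAlgebra

section Chains

variable {P : Type*} [PartialOrder P]

abbrev StrictChain (x y : P) (k : ℕ) : Type _ :=
  {z : Fin (k + 1) → P // StrictMono z ∧ z 0 = x ∧ z (Fin.last k) = y}

theorem chainCount_zero [DecidableEq P] (x y : P) :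
    chainCount x y 0 = if x = y then 1 else 0 := by
  split_ifs with hxy
  · subst hxy
    refine Nat.card_eq_one_iff_exists.2
      ⟨⟨fun _ => x, Subsingleton.strictMono (α := Fin 1) _, rfl, rfl⟩,
        fun z => Subtype.ext (funext fun i => ?_)⟩
    rw [Fin.fin_one_eq_zero i, z.2.2.1]
  · have : IsEmpty (StrictChain x y 0) := ⟨fun z => hxy (z.2.2.1.symm.trans z.2.2.2)⟩
    exact Nat.card_of_isEmpty

theorem chainCount_eq_zero_of_card_le [Fintype P] {k : ℕ} (hk : Fintype.card P ≤ k) (x y : P) :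
    chainCount x y k = 0 := by
  have : IsEmpty (StrictChain x y k) := ⟨fun z => by
    have := Fintype.card_le_of_injective z.1 z.2.1.injective
    rw [Fintype.card_fin] at this
    omega⟩
  exact Nat.card_of_isEmpty

def StrictChain.snocEquiv [LocallyFiniteOrder P] (x y : P) (k : ℕ) :
    StrictChain x y (k + 1) ≃ Σ z : Ico x y, StrictChain x (z : P) k where
  toFun w := ⟨⟨w.1 (Fin.last k).castSucc, by
      obtain ⟨hm, h0, hl⟩ := w.2
      exact mem_Ico.2 ⟨h0.symm.trans_le (hm.monotone (Fin.zero_le _)),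
        (hm (Fin.castSucc_lt_last _)).trans_eq hl⟩⟩,
    ⟨Fin.init w.1, w.2.1.comp Fin.strictMono_castSucc, w.2.2.1, rfl⟩⟩
  invFun zv := ⟨Fin.snoc zv.2.1 y, by
      obtain ⟨hv, h0, hl⟩ := zv.2.2
      refine ⟨Fin.strictMono_iff_lt_succ.2 fun i => ?_, by simpa [Fin.snoc] using h0,
        Fin.snoc_last _ _⟩
      refine Fin.lastCases ?_ (fun j => ?_) i
      · rw [Fin.succ_last, Fin.snoc_last, Fin.snoc_castSucc, hl]
        exact (mem_Ico.1 zv.1.2).2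
      · rw [Fin.succ_castSucc, Fin.snoc_castSucc, Fin.snoc_castSucc]
        exact hv Fin.castSucc_lt_succ⟩
  left_inv w := Subtype.ext (w.2.2.2 ▸ Fin.snoc_init_self w.1)
  right_inv := by
    rintro ⟨⟨z, hz⟩, v, hm, h0, hl⟩
    dsimp only at hl
    subst hl
    have hpen : (Fin.snoc v y : Fin (k + 2) → P) (Fin.last k).castSucc = v (Fin.last k) := by
      simp
    refine Sigma.ext (Subtype.ext hpen) ?_
    exact (Subtype.heq_iff_coe_eq fun _ => by dsimp only; rw [hpen]).2 (by simp)

theorem chainCount_succ [Fintype P] [LocallyFiniteOrder P] (x y : P) (k : ℕ) :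
    chainCount x y (k + 1) = ∑ z ∈ Ico x y, chainCount x z k := by
  rw [chainCount, Nat.card_congr (StrictChain.snocEquiv x y k), Nat.card_sigma]
  exact sum_coe_sort (Ico x y) fun z => chainCount x z k

end Chains

namespace IncidenceAlgebra

variable {𝕜 P : Type*} [Ring 𝕜] [PartialOrder P] [Fintype P] [LocallyFiniteOrder P]
  [DecidableEq P] [DecidableLE P]

theorem zeta_sub_one_pow_apply (k : ℕ) (a b : P) :
    ((zeta 𝕜 - 1) ^ k : IncidenceAlgebra 𝕜 P) a b = chainCount a b k := by
  induction k generalizing b with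
  | zero => rw [pow_zero, one_apply, chainCount_zero]; split_ifs <;> simp
  | succ k ih =>
    rw [pow_succ, mul_zeta_sub_one_apply, chainCount_succ, Nat.cast_sum]
    exact sum_congr rfl fun z _ => ih z

theorem zeta_sub_one_pow_card : (zeta 𝕜 - 1 : IncidenceAlgebra 𝕜 P) ^ Fintype.card P = 0 := by
  ext a b
  rw [zeta_sub_one_pow_apply, chainCount_eq_zero_of_card_le le_rfl, Nat.cast_zero, zero_apply]

end IncidenceAlgebra

open IncidenceAlgebra in
theorem mu_eq_alternating_sum_chainCount_general
    {P : Type*} [PartialOrder P] [Fintype P] [DecidableEq P] [LocallyFiniteOrder P]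
    (x y : P) :
    IncidenceAlgebra.mu ℤ x y =
      ∑ k ∈ Finset.range (Fintype.card P), (-1 : ℤ) ^ k * (chainCount x y k : ℤ) := by
  classical
  have hmu : mu ℤ = ∑ k ∈ range (Fintype.card P), (-(zeta ℤ - 1 : IncidenceAlgebra ℤ P)) ^ k :=
    eq_sum_range_neg_pow_of_mul_one_add_eq_one (by rw [add_sub_cancel, mu_mul_zeta])
      zeta_sub_one_pow_card
  rw [hmu, IncidenceAlgebra.sum_apply]
  simp only [neg_pow_apply, zeta_sub_one_pow_apply]

/-- Philip Hall's theorem: the Möbius function is the alternating sum of chain counts. -/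
theorem mu_eq_alternating_sum_chainCount
    {P : Type*} [PartialOrder P] [Fintype P] [DecidableEq P] [LocallyFiniteOrder P]
    (x y : P) (hxy : x ≤ y) :
    IncidenceAlgebra.mu ℤ x y =
      ∑ k ∈ Finset.range (Fintype.card P), (-1 : ℤ) ^ k * (chainCount x y k : ℤ) :=
  mu_eq_alternating_sum_chainCount_general x y
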